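/- (Proposition 4, non-singularity of the pilot-based BPSK FIM.) Assume P ≥ 2, D ≥ 1 and T_f ≠ 0. Then the matrix J_{bpsk,p} has trivial kernel (full column rank). Consequently, for every Hermitian positive definite complex matrix M indexed by (Fin L) ⊕ (Fin L) ⊕ (Fin (P+D) × Fin L) ⊕ (Fin L) ⊕ (Fin L), the matrix J_{bpsk,p}ᵀ · M · J_{bpsk,p} (equal to J_{bpsk,p}ᴴ · M · J_{bpsk,p} since J_{bpsk,p} has real entries) is Hermitian positive definite, and in particular invertible: pilots decouple the BPSK data phase from the Doppler parameters. -/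

import Mathlib

/-!
`J` is block lower triangular with respect to its column blocks. The delay rows give `H v₁ = 0`,
and `H` is unitriangular, hence invertible. The pilot phase row `κ = 1` has a nonzero scale and no
`E` entry, so it gives `H v₂ = 0`. The data phase row `κ = P`, first entry, then reads
`2πPT_f · v₃ = 0`, and the amplitude rows read off `v₄`. As `J` has real entries, `Jᵀ = Jᴴ`, and
`Jᴴ M J` is positive definite for every positive definite `M` because `J` is injective.
-/

open Matrix
open scoped ComplexOrder

noncomputable section

/-- The matrix `H`: first column all ones, agreeing with the identity elsewhere. -/
def Hmat (L : ℕ) : Matrix (Fin L) (Fin L) ℂ :=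
  Matrix.of fun i j => if j.val = 0 ∨ i = j then 1 else 0

/-- The all-ones column vector `E` of length `L`. -/
def Emat (L : ℕ) : Matrix (Fin L) (Fin 1) ℂ :=
  Matrix.of fun _ _ => 1

/-- Index of the observation vector in the pilot-based systems:
pilot delays, data delays, phases, pilot amplitudes, data amplitudes. -/
abbrev PIdx (L P D : ℕ) :=
  Fin L ⊕ Fin L ⊕ (Fin (P + D) × Fin L) ⊕ Fin L ⊕ Fin L

/-- The Jacobian matrix of the pilot-based BPSK ISAC case: row blocks `[H, 0, 0, 0]` for both
delay groups, `[0, (2πκT_f)·H, (2πκT_f)·E, 0]` for the phases with `κ ≥ P` and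
`[0, (2πκT_f)·H, 0, 0]` for `κ < P`, `[0, 0, 0, I_L]` for the amplitude groups. -/
def JbpskP (L P D : ℕ) (Tf : ℝ) :
    Matrix (PIdx L P D) (Fin L ⊕ Fin L ⊕ Fin 1 ⊕ Fin L) ℂ :=
  Matrix.of fun i j =>
    match i, j with
    | Sum.inl a, Sum.inl b => Hmat L a b
    | Sum.inr (Sum.inl a), Sum.inl b => Hmat L a b
    | Sum.inr (Sum.inr (Sum.inl (κ, a))), Sum.inr (Sum.inl b) =>
        ((2 * Real.pi * (κ.1 : ℝ) * Tf : ℝ) : ℂ) * Hmat L a b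
    | Sum.inr (Sum.inr (Sum.inl (κ, a))), Sum.inr (Sum.inr (Sum.inl b)) =>
        if P ≤ κ.1 then ((2 * Real.pi * (κ.1 : ℝ) * Tf : ℝ) : ℂ) * Emat L a b else 0
    | Sum.inr (Sum.inr (Sum.inr (Sum.inl a))), Sum.inr (Sum.inr (Sum.inr b)) =>
        (1 : Matrix (Fin L) (Fin L) ℂ) a b
    | Sum.inr (Sum.inr (Sum.inr (Sum.inr a))), Sum.inr (Sum.inr (Sum.inr b)) =>
        (1 : Matrix (Fin L) (Fin L) ℂ) a b
    | _, _ => 0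

lemma Hmat_isLowerTriangular (L : ℕ) : (Hmat L).IsLowerTriangular := by
  intro i j (hij : i < j)
  have hj : j.val ≠ 0 := by omega
  simp [Hmat, hj, hij.ne]

lemma det_Hmat (L : ℕ) : (Hmat L).det = 1 := by
  rw [det_of_isLowerTriangular _ (Hmat_isLowerTriangular L)]
  simp [Hmat]

lemma Hmat_mulVec_injective (L : ℕ) : Function.Injective (Hmat L).mulVec :=
  mulVec_injective_of_isUnit <| (isUnit_iff_isUnit_det _).mpr <| by simp [det_Hmat]

def phaseScale (Tf : ℝ) (κ : ℕ) : ℂ := ((2 * Real.pi * (κ : ℝ) * Tf : ℝ) : ℂ)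

lemma phaseScale_ne_zero {Tf : ℝ} (hTf : Tf ≠ 0) {κ : ℕ} (hκ : κ ≠ 0) : phaseScale Tf κ ≠ 0 := by
  unfold phaseScale
  exact_mod_cast by positivity

section mulVec

variable {L P D : ℕ} {Tf : ℝ} (v : Fin L ⊕ Fin L ⊕ Fin 1 ⊕ Fin L → ℂ)

lemma JbpskP_mulVec_delay (a : Fin L) :
    (JbpskP L P D Tf *ᵥ v) (Sum.inl a) = (Hmat L *ᵥ fun b => v (Sum.inl b)) a := by
  simp [mulVec, dotProduct, JbpskP, Fintype.sum_sum_type]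

lemma JbpskP_mulVec_phase (κ : Fin (P + D)) (a : Fin L) :
    (JbpskP L P D Tf *ᵥ v) (Sum.inr (Sum.inr (Sum.inl (κ, a)))) =
      phaseScale Tf κ * ((Hmat L *ᵥ fun b => v (Sum.inr (Sum.inl b))) a +
        if P ≤ κ.1 then v (Sum.inr (Sum.inr (Sum.inl 0))) else 0) := by
  simp [mulVec, dotProduct, JbpskP, Fintype.sum_sum_type, phaseScale, Emat, mul_add,
    Finset.mul_sum, mul_assoc]

lemma JbpskP_mulVec_amplitude (a : Fin L) :
    (JbpskP L P D Tf *ᵥ v) (Sum.inr (Sum.inr (Sum.inr (Sum.inl a)))) =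
      v (Sum.inr (Sum.inr (Sum.inr a))) := by
  simp [mulVec, dotProduct, JbpskP, Fintype.sum_sum_type, Matrix.one_apply]

end mulVec

lemma JbpskP_conjTranspose (L P D : ℕ) (Tf : ℝ) : (JbpskP L P D Tf)ᴴ = (JbpskP L P D Tf)ᵀ := by
  ext (b | b | b | b) (a | a | ⟨κ, a⟩ | a | a) <;>
    simp [JbpskP, Hmat, Emat, Matrix.one_apply, apply_ite (star : ℂ → ℂ)]

theorem JbpskP_mulVec_injective {L P D : ℕ} {Tf : ℝ} (hL : 1 ≤ L) (hP : 2 ≤ P) (hD : 1 ≤ D)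
    (hTf : Tf ≠ 0) : Function.Injective (JbpskP L P D Tf).mulVec := by
  rw [← coe_mulVecLin, injective_iff_map_eq_zero]
  intro v hv
  rw [coe_mulVecLin] at hv
  have hv₁ : (fun b => v (Sum.inl b)) = 0 := Hmat_mulVec_injective L <| by
    ext a
    simpa [JbpskP_mulVec_delay] using congrFun hv (Sum.inl a)
  have hv₂ : (fun b => v (Sum.inr (Sum.inl b))) = 0 := Hmat_mulVec_injective L <| by
    ext a
    have h := congrFun hv (Sum.inr (Sum.inr (Sum.inl (⟨1, by omega⟩, a))))
    rw [JbpskP_mulVec_phase, if_neg (show ¬P ≤ 1 by omega)] at h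
    simpa [phaseScale_ne_zero hTf one_ne_zero] using h
  have hv₃ : v (Sum.inr (Sum.inr (Sum.inl 0))) = 0 := by
    have h := congrFun hv (Sum.inr (Sum.inr (Sum.inl (⟨P, by omega⟩, ⟨0, hL⟩))))
    rw [JbpskP_mulVec_phase, if_pos le_rfl, hv₂, mulVec_zero] at h
    simpa [phaseScale_ne_zero hTf (show P ≠ 0 by omega)] using h
  have hv₄ (a : Fin L) : v (Sum.inr (Sum.inr (Sum.inr a))) = 0 := by
    simpa [JbpskP_mulVec_amplitude] using congrFun hv (Sum.inr (Sum.inr (Sum.inr (Sum.inl a))))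
  ext (b | b | b | b)
  · exact congrFun hv₁ b
  · exact congrFun hv₂ b
  · exact Subsingleton.elim b 0 ▸ hv₃
  · exact hv₄ b

/-- Proposition 4, non-singularity of the pilot-based BPSK FIM: `J_{bpsk,p}` has trivial
kernel, and for every Hermitian positive definite `M` the matrix `J_{bpsk,p}ᵀ · M · J_{bpsk,p}`
is Hermitian positive definite, in particular invertible. -/
theorem bpsk_pilot_fim_nonsingular (L P D : ℕ) (hL : 1 ≤ L) (hP : 2 ≤ P) (hD : 1 ≤ D)
    (Tf : ℝ) (hTf : Tf ≠ 0) :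
    (∀ v : (Fin L ⊕ Fin L ⊕ Fin 1 ⊕ Fin L) → ℂ,
        (JbpskP L P D Tf).mulVec v = 0 → v = 0) ∧
      ∀ M : Matrix (PIdx L P D) (PIdx L P D) ℂ, M.PosDef →
        ((JbpskP L P D Tf)ᵀ * M * JbpskP L P D Tf).PosDef ∧
          IsUnit ((JbpskP L P D Tf)ᵀ * M * JbpskP L P D Tf) := by
  have hinj := JbpskP_mulVec_injective hL hP hD hTf
  refine ⟨fun v hv => hinj (hv.trans (mulVec_zero _).symm), fun M hM => ?_⟩
  have hpd := JbpskP_conjTranspose L P D Tf ▸ hM.conjTranspose_mul_mul_same hinj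
  exact ⟨hpd, hpd.isUnit⟩
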